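/- Universal recoverability bound in the weighted norm: let φ : M_n(ℂ) → M_k(ℂ) be CPTP, B positive definite with tr(B) = 1 and φ(B) positive definite, A ∈ M_n(ℂ) positive semidefinite with tr(A) = 1, and let R(Y) = B^{1/2} φ*(φ(B)^{-1/2} Y φ(B)^{-1/2}) B^{1/2} be the Petz recovery map. Then ‖A − R(φ(A))‖²_{B,2} ≤ S₂(A|B) − S₂(φ(A)|φ(B)). -/

import Mathlib

open Matrix
open scoped ComplexOrder
open scoped Kronecker
set_option linter.unusedSectionVars false
set_option maxHeartbeats 1000000

noncomputable section

abbrev Mat (n : ℕ) := Matrix (Fin n) (Fin n) ℂ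

/-- Apply `φ` entrywise to the `n × n` blocks of an `m·n × m·n` matrix. -/
def blockApply {n k : ℕ} (φ : Mat n →ₗ[ℂ] Mat k) (m : ℕ)
    (M : Matrix (Fin m × Fin n) (Fin m × Fin n) ℂ) :
    Matrix (Fin m × Fin k) (Fin m × Fin k) ℂ :=
  Matrix.of fun p q => φ (Matrix.of fun a b => M (p.1, a) (q.1, b)) p.2 q.2

/-- The positive semidefinite square root of a positive semidefinite matrix, as defined in
Mathlib of December 2024 (removed from Mathlib since). -/
def Matrix.PosSemidef.sqrt {m : Type*} [Fintype m] [DecidableEq m] {𝕜 : Type*} [RCLike 𝕜]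
    {A : Matrix m m 𝕜} (hA : A.PosSemidef) : Matrix m m 𝕜 :=
  hA.1.eigenvectorUnitary.1 * diagonal ((↑) ∘ (√·) ∘ hA.1.eigenvalues) *
  (star hA.1.eigenvectorUnitary : Matrix m m 𝕜)

theorem Matrix.PosSemidef.posSemidef_sqrt {m : Type*} [Fintype m] [DecidableEq m] {𝕜 : Type*}
    [RCLike 𝕜] {A : Matrix m m 𝕜} (hA : A.PosSemidef) : hA.sqrt.PosSemidef := by
  unfold Matrix.PosSemidef.sqrt
  have h := (posSemidef_diagonal_iff (d := ((↑) ∘ (√·) ∘ hA.1.eigenvalues : m → 𝕜))).2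
    (fun i => by simp [Real.sqrt_nonneg])
  have := h.mul_mul_conjTranspose_same (hA.1.eigenvectorUnitary.1)
  simpa [Matrix.star_eq_conjTranspose] using this

/-- Complete positivity of a linear map between matrix algebras. -/
def IsCP {n k : ℕ} (φ : Mat n →ₗ[ℂ] Mat k) : Prop :=
  ∀ (m : ℕ) (M : Matrix (Fin m × Fin n) (Fin m × Fin n) ℂ),
    M.PosSemidef → (blockApply φ m M).PosSemidef

/-- Trace preservation. -/
def IsTP {n k : ℕ} (φ : Mat n →ₗ[ℂ] Mat k) : Prop :=
  ∀ X : Mat n, (φ X).trace = X.trace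

/-- The Hilbert–Schmidt adjoint of `φ`, characterized by
`tr (hsAdj φ A * Xᴴ) = tr (A * (φ X)ᴴ)` for all `X`. -/
def hsAdj {n k : ℕ} (φ : Mat n →ₗ[ℂ] Mat k) (A : Mat k) : Mat n :=
  Matrix.of fun i j => (A * (φ (Matrix.single i j 1))ᴴ).trace

/-- The trace norm `tr |X| = tr ((Xᴴ X)^{1/2})`. -/
def traceNorm {n : ℕ} (X : Mat n) : ℝ :=
  ((Matrix.posSemidef_conjTranspose_mul_self X).sqrt.trace).re


/-- The positive square root of a positive definite matrix. -/
def sqrtPD {n : ℕ} {B : Mat n} (hB : B.PosDef) : Mat n := hB.posSemidef.sqrt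

/-- `B^{-1/2}` for a positive definite `B`. -/
def invSqrtPD {n : ℕ} {B : Mat n} (hB : B.PosDef) : Mat n := (sqrtPD hB)⁻¹

/-- `B^{-1/4}` for a positive definite `B`. -/
def invFourthPD {n : ℕ} {B : Mat n} (hB : B.PosDef) : Mat n :=
  (hB.posSemidef.posSemidef_sqrt.sqrt)⁻¹

/-- The sandwiched 2-Rényi quasi-relative entropy functional
`S₂(A|B) = tr ((B^{-1/4} A B^{-1/4})²)`. -/
def S2 {n : ℕ} (A : Mat n) {B : Mat n} (hB : B.PosDef) : ℝ :=
  (((invFourthPD hB * A * invFourthPD hB) ^ 2).trace).re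

/-- The squared Araki–Masuda weighted 2-norm `‖X‖²_{B,2}`. -/
def wNormSq {n : ℕ} (X : Mat n) {B : Mat n} (hB : B.PosDef) : ℝ :=
  (((invFourthPD hB * X * invFourthPD hB)ᴴ * (invFourthPD hB * X * invFourthPD hB)).trace).re

/-- The Petz recovery map `Y ↦ B^{1/2} φ*(φ(B)^{-1/2} Y φ(B)^{-1/2}) B^{1/2}`. -/
def petz {n k : ℕ} (φ : Mat n →ₗ[ℂ] Mat k) {B : Mat n} (hB : B.PosDef)
    (hφB : (φ B).PosDef) (Y : Mat k) : Mat n :=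
  sqrtPD hB * hsAdj φ (invSqrtPD hφB * Y * invSqrtPD hφB) * sqrtPD hB

/-- Squared Frobenius (Hilbert–Schmidt) norm. -/
def frobSq {n : ℕ} (X : Mat n) : ℝ := ((Xᴴ * X).trace).re

section SqrtCompat
open scoped MatrixOrder Matrix.Norms.L2Operator

theorem Matrix.PosSemidef.sqrt_eq_cfcSqrt {m : Type*} [Fintype m] [DecidableEq m]
    {A : Matrix m m ℂ} (hA : A.PosSemidef) : hA.sqrt = CFC.sqrt A := by
  rw [CFC.sqrt_eq_cfc, cfc_nnreal_eq_real _ A hA.nonneg, hA.1.cfc_eq, IsHermitian.cfc,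
    Unitary.conjStarAlgAut_apply, Matrix.PosSemidef.sqrt]
  have hf : (fun x : ℝ => ((NNReal.sqrt x.toNNReal : NNReal) : ℝ)) = (√·) := by
    funext x; rw [Real.sqrt]
  rw [hf]

theorem Matrix.PosSemidef.sqrt_mul_self {m : Type*} [Fintype m] [DecidableEq m]
    {A : Matrix m m ℂ} (hA : A.PosSemidef) : hA.sqrt * hA.sqrt = A := by
  rw [hA.sqrt_eq_cfcSqrt]
  exact CFC.sqrt_mul_sqrt_self A hA.nonneg

theorem Matrix.PosSemidef.eq_sqrt_of_sq_eq {m : Type*} [Fintype m] [DecidableEq m]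
    {A B : Matrix m m ℂ} (hA : A.PosSemidef) (hB : B.PosSemidef) (hAB : A ^ 2 = B) :
    A = hB.sqrt := by
  rw [hB.sqrt_eq_cfcSqrt]
  exact (CFC.sqrt_unique (by rw [← pow_two, hAB]) hA.nonneg).symm

end SqrtCompat

section GeneralLemmas
variable {m m' : Type*} [Fintype m] [DecidableEq m] [Fintype m'] [DecidableEq m']

lemma kron_conjT (A : Matrix m m ℂ) (B : Matrix m' m' ℂ) :
    (A ⊗ₖ B)ᴴ = Aᴴ ⊗ₖ Bᴴ := by
  ext ⟨i, j⟩ ⟨a, b⟩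
  simp [conjTranspose_apply, mul_comm]

lemma kron_psd {A : Matrix m m ℂ} {B : Matrix m' m' ℂ}
    (hA : A.PosSemidef) (hB : B.PosSemidef) : (A ⊗ₖ B).PosSemidef := by
  exact hA.kronecker hB

lemma kron_isHermitian {A : Matrix m m ℂ} {B : Matrix m' m' ℂ}
    (hA : A.IsHermitian) (hB : B.IsHermitian) : (A ⊗ₖ B).IsHermitian := by
  rw [Matrix.IsHermitian, kron_conjT, hA.eq, hB.eq]

lemma psd_re_quad {M : Matrix m m ℂ} (hM : M.PosSemidef) (x : m → ℂ) :
    0 ≤ (star x ⬝ᵥ M *ᵥ x).re := by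
  have := hM.dotProduct_mulVec_nonneg x
  simpa [Complex.le_def] using this.1

lemma psd_diag_nonneg {M : Matrix m m ℂ} (hM : M.PosSemidef) (i : m) :
    0 ≤ M i i := by
  have := hM.dotProduct_mulVec_nonneg (Pi.single i 1)
  simpa [mulVec_single, dotProduct, Pi.single_apply, Finset.sum_ite_eq'] using this

lemma psd_trace_nonneg {M : Matrix m m ℂ} (hM : M.PosSemidef) :
    0 ≤ M.trace := by
  rw [Matrix.trace]
  exact Finset.sum_nonneg fun i _ => psd_diag_nonneg hM i

lemma psd_one : (1 : Matrix m m ℂ).PosSemidef := by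
  have := posSemidef_conjTranspose_mul_self (1 : Matrix m m ℂ)
  simpa using this

lemma complex_nonneg_add_eq_zero {a b : ℂ} (ha : 0 ≤ a) (hb : 0 ≤ b)
    (hab : a + b = 0) : a = 0 ∧ b = 0 := by
  constructor
  · refine le_antisymm ?_ ha
    have : a = -b := by linear_combination hab
    rw [this]; simpa using hb
  · refine le_antisymm ?_ hb
    have : b = -a := by linear_combination hab
    rw [this]; simpa using ha

/-- Operator monotonicity of the matrix square root. -/
lemma sqrt_monotone {A B : Matrix m m ℂ} (hA : A.PosSemidef) (hB : B.PosSemidef)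
    (hAB : (B - A).PosSemidef) : (hB.sqrt - hA.sqrt).PosSemidef := by
  set S := hA.sqrt with hSdef
  set T := hB.sqrt with hTdef
  have hS := hA.posSemidef_sqrt
  have hT := hB.posSemidef_sqrt
  have hH : (T - S).IsHermitian := hT.1.sub hS.1
  apply hH.posSemidef_iff_eigenvalues_nonneg.mpr
  intro i
  by_contra hneg
  push_neg at hneg
  simp only [Pi.zero_apply] at hneg
  set t := hH.eigenvalues i with htdef
  set v : m → ℂ := ⇑(hH.eigenvectorBasis i) with hvdef
  have hv : (T - S) *ᵥ v = (t : ℂ) • v := by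
    have := hH.mulVec_eigenvectorBasis i
    rw [← htdef] at this
    convert this using 1
    ext j; simp [hvdef, Complex.real_smul]
  have hvnorm : ‖hH.eigenvectorBasis i‖ = 1 := hH.eigenvectorBasis.orthonormal.1 i
  have hvne : v ≠ 0 := by
    intro h
    have : (hH.eigenvectorBasis i : EuclideanSpace ℂ m) = 0 := by
      ext j; exact congrFun h j
    rw [this] at hvnorm; simp at hvnorm
  have hBA : B - A = T * (T - S) + (T - S) * S := by
    rw [← hB.sqrt_mul_self, ← hA.sqrt_mul_self, ← hSdef, ← hTdef]
    noncomm_ring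
  have key : star v ⬝ᵥ (B - A) *ᵥ v
      = (t : ℂ) * (star v ⬝ᵥ T *ᵥ v + star v ⬝ᵥ S *ᵥ v) := by
    rw [hBA, add_mulVec, dotProduct_add]
    have h1 : star v ⬝ᵥ (T * (T - S)) *ᵥ v = (t : ℂ) * (star v ⬝ᵥ T *ᵥ v) := by
      rw [← mulVec_mulVec, hv, mulVec_smul, dotProduct_smul, smul_eq_mul]
    have h2 : star v ⬝ᵥ ((T - S) * S) *ᵥ v = (t : ℂ) * (star v ⬝ᵥ S *ᵥ v) := by
      rw [← mulVec_mulVec, dotProduct_mulVec]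
      have : star v ᵥ* (T - S) = (t : ℂ) • star v := by
        have h3 : star v ᵥ* (T - S) = star ((T - S) *ᵥ v) := by
          rw [star_mulVec, hH.eq]
        rw [h3, hv]
        ext j
        simp [Pi.smul_apply]
      rw [this, smul_dotProduct, smul_eq_mul]
    rw [h1, h2, mul_add]
  have h0 : 0 ≤ star v ⬝ᵥ (B - A) *ᵥ v := hAB.dotProduct_mulVec_nonneg v
  have haT : 0 ≤ star v ⬝ᵥ T *ᵥ v := hT.dotProduct_mulVec_nonneg v
  have haS : 0 ≤ star v ⬝ᵥ S *ᵥ v := hS.dotProduct_mulVec_nonneg v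
  set a := star v ⬝ᵥ T *ᵥ v
  set b := star v ⬝ᵥ S *ᵥ v
  have hsum : a + b = 0 := by
    have him : (a + b).im = 0 := by
      have h1 := (Complex.le_def.mp haT).2
      have h2 := (Complex.le_def.mp haS).2
      simp [Complex.add_im, ← h1, ← h2]
    have hre : 0 ≤ (a + b).re := by
      have h1 := (Complex.le_def.mp haT).1
      have h2 := (Complex.le_def.mp haS).1
      simp only [Complex.add_re]
      simp only [Complex.zero_re] at h1 h2
      linarith
    have hre' : (a + b).re ≤ 0 := by
      have := (Complex.le_def.mp (key ▸ h0)).1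
      rw [Complex.zero_re] at this
      have hmul : ((t : ℂ) * (a + b)).re = t * (a + b).re := by
        rw [Complex.mul_re]
        simp [him]
      rw [hmul] at this
      nlinarith
    exact Complex.ext (by simp [le_antisymm hre' hre]) (by simpa using him)
  obtain ⟨ha0, hb0⟩ := complex_nonneg_add_eq_zero haT haS hsum
  have hTv : T *ᵥ v = 0 := (hT.dotProduct_mulVec_zero_iff v).mp ha0
  have hSv : S *ᵥ v = 0 := (hS.dotProduct_mulVec_zero_iff v).mp hb0
  have : (t : ℂ) • v = 0 := by rw [← hv, sub_mulVec, hTv, hSv, sub_zero]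
  have htne : (t : ℂ) ≠ 0 := by
    simp only [ne_eq, Complex.ofReal_eq_zero]
    exact ne_of_lt hneg
  exact hvne (by simpa [htne] using (smul_eq_zero.mp this))

/-- A Hermitian matrix is dominated by the square root of its square. -/
lemma le_sqrt_sq {H : Matrix m m ℂ} (hH : H.IsHermitian) (h2 : (H * H).PosSemidef) :
    (h2.sqrt - H).PosSemidef := by
  set U : Matrix m m ℂ := (hH.eigenvectorUnitary : Matrix m m ℂ) with hUdef
  have hUU : (star U) * U = 1 := (Matrix.mem_unitaryGroup_iff').mp hH.eigenvectorUnitary.2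
  set d : m → ℝ := hH.eigenvalues
  have hspec : H = U * diagonal (Complex.ofReal ∘ d) * (star U) := hH.spectral_theorem
  set P : Matrix m m ℂ := U * diagonal (Complex.ofReal ∘ fun i => |d i|) * (star U) with hPdef
  have conj_psd : ∀ (f : m → ℝ), (∀ i, 0 ≤ f i) →
      (U * diagonal (Complex.ofReal ∘ f) * (star U)).PosSemidef := by
    intro f hf
    rw [star_eq_conjTranspose]
    exact (posSemidef_diagonal_iff.mpr fun i => by
      simp [Complex.le_def, hf i]).mul_mul_conjTranspose_same U
  have hPpsd : P.PosSemidef := conj_psd _ fun i => abs_nonneg _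
  have key : ∀ (f g : m → ℝ), (U * diagonal (Complex.ofReal ∘ f) * star U) *
      (U * diagonal (Complex.ofReal ∘ g) * star U)
      = U * diagonal (Complex.ofReal ∘ fun i => f i * g i) * star U := by
    intro f g
    have h1 : (U * diagonal (Complex.ofReal ∘ f) * star U) *
        (U * diagonal (Complex.ofReal ∘ g) * star U)
        = U * (diagonal (Complex.ofReal ∘ f) * ((star U * U) *
            diagonal (Complex.ofReal ∘ g))) * star U := by noncomm_ring
    rw [h1, hUU, Matrix.one_mul, diagonal_mul_diagonal]
    have : (fun i => (Complex.ofReal ∘ f) i * (Complex.ofReal ∘ g) i)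
        = Complex.ofReal ∘ fun i => f i * g i := by funext i; simp
    rw [this]
  have hPP : P * P = H * H := by
    rw [hPdef, hspec, key, key]
    have : (fun i => |d i| * |d i|) = fun i => d i * d i := by
      funext i; exact abs_mul_abs_self _
    rw [this]
  have hsq : P = h2.sqrt := hPpsd.eq_sqrt_of_sq_eq h2 (by rw [pow_two, hPP])
  rw [← hsq, hPdef, hspec]
  have hdd : diagonal (Complex.ofReal ∘ fun i => |d i|) - diagonal (Complex.ofReal ∘ d)
      = diagonal (Complex.ofReal ∘ fun i => |d i| - d i) := by
    rw [diagonal_sub]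
    have : (fun i => (Complex.ofReal ∘ fun i => |d i|) i - (Complex.ofReal ∘ d) i)
        = Complex.ofReal ∘ fun i => |d i| - d i := by funext i; simp
    rw [this]
  rw [← Matrix.sub_mul, ← Matrix.mul_sub, hdd]
  exact conj_psd _ fun i => sub_nonneg.mpr (le_abs_self _)

lemma posSemidef_fromBlocks_diag {P : Matrix m m ℂ} {Q : Matrix m' m' ℂ}
    (hP : P.PosSemidef) (hQ : Q.PosSemidef) :
    (fromBlocks P 0 0 Q).PosSemidef := by
  rw [posSemidef_iff_dotProduct_mulVec]
  constructor
  · rw [isHermitian_fromBlocks_iff]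
    exact ⟨hP.1, by simp, by simp, hQ.1⟩
  · intro x
    have he : star x ⬝ᵥ (fromBlocks P 0 0 Q) *ᵥ x
        = star (x ∘ Sum.inl) ⬝ᵥ P *ᵥ (x ∘ Sum.inl)
          + star (x ∘ Sum.inr) ⬝ᵥ Q *ᵥ (x ∘ Sum.inr) := by
      rw [fromBlocks_mulVec]
      simp [dotProduct, Fintype.sum_sum_type, mul_comm]
    rw [he]
    exact add_nonneg (hP.dotProduct_mulVec_nonneg _) (hQ.dotProduct_mulVec_nonneg _)

lemma posDef_of_psd_isUnit {M : Matrix m m ℂ} (hM : M.PosSemidef)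
    (hu : IsUnit M) : M.PosDef := by
  refine posDef_iff_dotProduct_mulVec.mpr ⟨hM.1, fun x hx => ?_⟩
  rcases lt_or_eq_of_le (hM.dotProduct_mulVec_nonneg x) with h | h
  · exact h
  · exfalso
    apply hx
    have h0 : M *ᵥ x = 0 := (hM.dotProduct_mulVec_zero_iff x).mp h.symm
    obtain ⟨N, hN⟩ := hu.exists_left_inv
    have := congrArg (N *ᵥ ·) h0
    simpa [mulVec_mulVec, hN] using this

lemma sqrt_posDef {B : Matrix m m ℂ} (hB : B.PosDef) : hB.posSemidef.sqrt.PosDef := by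
  apply posDef_of_psd_isUnit hB.posSemidef.posSemidef_sqrt
  rw [Matrix.isUnit_iff_isUnit_det]
  have hd : hB.posSemidef.sqrt.det * hB.posSemidef.sqrt.det = B.det := by
    rw [← det_mul, hB.posSemidef.sqrt_mul_self]
  have hne : B.det ≠ 0 := hB.det_pos.ne'
  rw [isUnit_iff_ne_zero]
  intro h
  rw [h, mul_zero] at hd
  exact hne hd.symm

end GeneralLemmas

section VecLemmas

/-- vectorization of a matrix -/
def vecM {n : ℕ} (X : Mat n) : Fin n × Fin n → ℂ := fun p => X p.1 p.2

lemma vecM_sub {n : ℕ} (X Y : Mat n) : vecM (X - Y) = vecM X - vecM Y := rfl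

lemma vecM_of {n : ℕ} (x : Fin n × Fin n → ℂ) :
    vecM (Matrix.of fun i j => x (i, j)) = x := by
  funext p; rfl

lemma kron_mulVec {n : ℕ} (C D Y : Mat n) :
    (C ⊗ₖ Dᵀ) *ᵥ vecM Y = vecM (C * Y * D) := by
  funext p
  calc ((C ⊗ₖ Dᵀ) *ᵥ vecM Y) p
      = ∑ a, ∑ b, C p.1 a * D b p.2 * Y a b := by
        simp [mulVec, dotProduct, Fintype.sum_prod_type, vecM]
    _ = ∑ b, ∑ a, C p.1 a * Y a b * D b p.2 := by
        rw [Finset.sum_comm]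
        exact Finset.sum_congr rfl fun b _ => Finset.sum_congr rfl fun a _ => by ring
    _ = vecM (C * Y * D) p := by
        simp [vecM, Matrix.mul_apply, Finset.sum_mul]

lemma star_vec_dot {n : ℕ} (X Z : Mat n) :
    star (vecM X) ⬝ᵥ vecM Z = (Xᴴ * Z).trace := by
  simp only [dotProduct, Pi.star_apply, vecM, Matrix.trace, Matrix.diag, Matrix.mul_apply,
    conjTranspose_apply, Fintype.sum_prod_type]
  rw [Finset.sum_comm]

lemma quad_eq_trace {n : ℕ} (C D X Y : Mat n) :
    star (vecM X) ⬝ᵥ ((C ⊗ₖ Dᵀ) *ᵥ vecM Y) = (Xᴴ * C * Y * D).trace := by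
  rw [kron_mulVec, star_vec_dot, ← Matrix.mul_assoc, ← Matrix.mul_assoc]

def phiMat {n k : ℕ} (φ : Mat n →ₗ[ℂ] Mat k) : Matrix (Fin k × Fin k) (Fin n × Fin n) ℂ :=
  Matrix.of fun p q => φ (Matrix.single q.1 q.2 1) p.1 p.2

lemma phiMat_mulVec {n k : ℕ} (φ : Mat n →ₗ[ℂ] Mat k) (X : Mat n) :
    phiMat φ *ᵥ vecM X = vecM (φ X) := by
  funext p
  have hX : X = ∑ q : Fin n × Fin n, X q.1 q.2 • Matrix.single q.1 q.2 (1 : ℂ) := by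
    rw [Fintype.sum_prod_type]
    conv_lhs => rw [matrix_eq_sum_single X]
    refine Finset.sum_congr rfl fun i _ => Finset.sum_congr rfl fun j _ => ?_
    rw [smul_single, smul_eq_mul, mul_one]
  calc (phiMat φ *ᵥ vecM X) p
      = ∑ q : Fin n × Fin n, X q.1 q.2 * φ (Matrix.single q.1 q.2 1) p.1 p.2 := by
        simp [mulVec, dotProduct, phiMat, vecM, mul_comm]
    _ = vecM (φ X) p := by
        conv_rhs => rw [hX, map_sum]
        simp only [_root_.map_smul, vecM, Matrix.sum_apply, Matrix.smul_apply, smul_eq_mul]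

lemma phiMat_conjT_mulVec {n k : ℕ} (φ : Mat n →ₗ[ℂ] Mat k) (Y : Mat k) :
    (phiMat φ)ᴴ *ᵥ vecM Y = vecM (hsAdj φ Y) := by
  funext p
  simp only [mulVec, dotProduct, conjTranspose_apply, phiMat, of_apply, vecM, hsAdj,
    Matrix.trace, Matrix.diag, Matrix.mul_apply, Fintype.sum_prod_type]
  apply Finset.sum_congr rfl
  intro a _
  apply Finset.sum_congr rfl
  intro b _
  simp [mul_comm]

end VecLemmas

section CPLemmas

def e2 (n : ℕ) : (Fin 2 × Fin n) ≃ (Fin n ⊕ Fin n) where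
  toFun p := if p.1 = 0 then Sum.inl p.2 else Sum.inr p.2
  invFun s := Sum.elim (fun a => ((0 : Fin 2), a)) (fun a => ((1 : Fin 2), a)) s
  left_inv := by
    rintro ⟨i, a⟩
    fin_cases i <;> simp
  right_inv := by
    rintro (a | a) <;> simp

lemma blockApply_fromBlocks {n k : ℕ} (φ : Mat n →ₗ[ℂ] Mat k) (X11 X12 X21 X22 : Mat n) :
    blockApply φ 2 ((fromBlocks X11 X12 X21 X22).submatrix (e2 n) (e2 n))
      = (fromBlocks (φ X11) (φ X12) (φ X21) (φ X22)).submatrix (e2 k) (e2 k) := by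
  ext ⟨p1, p2⟩ ⟨q1, q2⟩
  have hof : ∀ Y : Mat n, (Matrix.of fun a b => Y a b) = Y := fun _ => rfl
  fin_cases p1 <;> fin_cases q1 <;>
    simp [blockApply, e2, fromBlocks, submatrix_apply, hof]

/-- A CP map between matrix algebras is star-preserving. -/
lemma IsCP.map_conjTranspose {n k : ℕ} {φ : Mat n →ₗ[ℂ] Mat k} (hCP : IsCP φ)
    (X : Mat n) : φ Xᴴ = (φ X)ᴴ := by
  have hpsd : (fromBlocks (1 : Mat n) X Xᴴ (Xᴴ * X)).PosSemidef := by
    have : fromBlocks (1 : Mat n) X Xᴴ (Xᴴ * X)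
        = (fromBlocks (1 : Mat n) X 0 0)ᴴ * fromBlocks (1 : Mat n) X 0 0 := by
      rw [fromBlocks_conjTranspose, fromBlocks_multiply]
      simp
    rw [this]
    exact posSemidef_conjTranspose_mul_self _
  have h1 : ((fromBlocks (1 : Mat n) X Xᴴ (Xᴴ * X)).submatrix (e2 n) (e2 n)).PosSemidef :=
    (posSemidef_submatrix_equiv (e2 n)).mpr hpsd
  have h2 := hCP 2 _ h1
  rw [blockApply_fromBlocks] at h2
  have h3 : (fromBlocks (φ 1) (φ X) (φ Xᴴ) (φ (Xᴴ * X))).PosSemidef :=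
    (posSemidef_submatrix_equiv (e2 k)).mp h2
  have h4 := isHermitian_fromBlocks_iff.mp h3.1
  exact h4.2.1.symm

/-- Choi's CP-Schwarz inequality. -/
lemma IsCP.choi {n k : ℕ} {φ : Mat n →ₗ[ℂ] Mat k} (hCP : IsCP φ)
    {B : Mat n} (hB : B.PosDef) (hφB : (φ B).PosDef) (X : Mat n) :
    (φ (Xᴴ * B⁻¹ * X) - (φ X)ᴴ * (φ B)⁻¹ * (φ X)).PosSemidef := by
  haveI : Invertible B := hB.isUnit.invertible
  haveI : Invertible (φ B) := hφB.isUnit.invertible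
  have hpsd : (fromBlocks B X Xᴴ (Xᴴ * B⁻¹ * X)).PosSemidef := by
    rw [PosDef.fromBlocks₁₁ X (Xᴴ * B⁻¹ * X) hB]
    rw [sub_self]
    exact PosSemidef.zero
  have h1 : ((fromBlocks B X Xᴴ (Xᴴ * B⁻¹ * X)).submatrix (e2 n) (e2 n)).PosSemidef :=
    (posSemidef_submatrix_equiv (e2 n)).mpr hpsd
  have h2 := hCP 2 _ h1
  rw [blockApply_fromBlocks] at h2
  have h3 : (fromBlocks (φ B) (φ X) (φ X)ᴴ (φ (Xᴴ * B⁻¹ * X))).PosSemidef := by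
    have := (posSemidef_submatrix_equiv (e2 k)).mp h2
    rwa [hCP.map_conjTranspose] at this
  exact (PosDef.fromBlocks₁₁ (φ X) (φ (Xᴴ * B⁻¹ * X)) hφB).mp h3

end CPLemmas

theorem recoverability_weighted_norm {n k : ℕ} (φ : Mat n →ₗ[ℂ] Mat k)
    (hCP : IsCP φ) (hTP : IsTP φ) {B : Mat n} (hB : B.PosDef) (htrB : B.trace = 1)
    (hφB : (φ B).PosDef) {A : Mat n} (hA : A.PosSemidef) (htrA : A.trace = 1) :
    wNormSq (A - petz φ hB hφB (φ A)) hB ≤ S2 A hB - S2 (φ A) hφB := by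
  classical
  -- ===== notation for the roots of B =====
  set s : Mat n := sqrtPD hB with hsdef
  have hs_psd : s.PosSemidef := hB.posSemidef.posSemidef_sqrt
  have hs_pd : s.PosDef := sqrt_posDef hB
  have hs_mul : s * s = B := hB.posSemidef.sqrt_mul_self
  have hs_det : IsUnit s.det := by
    rw [isUnit_iff_ne_zero]; exact hs_pd.det_pos.ne'
  have hB_det : IsUnit B.det := by
    rw [isUnit_iff_ne_zero]; exact hB.det_pos.ne'
  set b2 : Mat n := invSqrtPD hB with hb2def
  have hb2 : b2 = s⁻¹ := rfl
  have hb2_pd : b2.PosDef := by rw [hb2]; exact hs_pd.inv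
  have hb2_herm : b2.IsHermitian := hb2_pd.1
  have hb2_mul : b2 * b2 = B⁻¹ := by
    rw [hb2, ← hs_mul, Matrix.mul_inv_rev]
  have hsb2 : s * b2 = 1 := by rw [hb2]; exact Matrix.mul_nonsing_inv s hs_det
  have hb2s : b2 * s = 1 := by rw [hb2]; exact Matrix.nonsing_inv_mul s hs_det
  set r : Mat n := hB.posSemidef.posSemidef_sqrt.sqrt with hrdef
  have hr_mul : r * r = s := hB.posSemidef.posSemidef_sqrt.sqrt_mul_self
  have hr_pd : r.PosDef := sqrt_posDef hs_pd
  set b4 : Mat n := invFourthPD hB with hb4def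
  have hb4 : b4 = r⁻¹ := rfl
  have hb4_pd : b4.PosDef := by rw [hb4]; exact hr_pd.inv
  have hb4_herm : b4.IsHermitian := hb4_pd.1
  have hb4_mul : b4 * b4 = b2 := by
    rw [hb4, ← Matrix.mul_inv_rev, hr_mul, hb2]
  -- ===== notation for the roots of φ B =====
  set t : Mat k := sqrtPD hφB with htdef
  have ht_psd : t.PosSemidef := hφB.posSemidef.posSemidef_sqrt
  have ht_pd : t.PosDef := sqrt_posDef hφB
  have ht_mul : t * t = φ B := hφB.posSemidef.sqrt_mul_self
  have ht_det : IsUnit t.det := by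
    rw [isUnit_iff_ne_zero]; exact ht_pd.det_pos.ne'
  have hφB_det : IsUnit (φ B).det := by
    rw [isUnit_iff_ne_zero]; exact hφB.det_pos.ne'
  set c2 : Mat k := invSqrtPD hφB with hc2def
  have hc2 : c2 = t⁻¹ := rfl
  have hc2_pd : c2.PosDef := by rw [hc2]; exact ht_pd.inv
  have hc2_herm : c2.IsHermitian := hc2_pd.1
  have hc2_mul : c2 * c2 = (φ B)⁻¹ := by
    rw [hc2, ← ht_mul, Matrix.mul_inv_rev]
  have hc2sand : c2 * (φ B) * c2 = 1 := by
    rw [hc2, ← ht_mul]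
    have : t⁻¹ * (t * t) * t⁻¹ = (t⁻¹ * t) * (t * t⁻¹) := by noncomm_ring
    rw [this, Matrix.nonsing_inv_mul t ht_det, Matrix.mul_nonsing_inv t ht_det, one_mul]
  set q : Mat k := hφB.posSemidef.posSemidef_sqrt.sqrt with hqdef
  have hq_mul : q * q = t := hφB.posSemidef.posSemidef_sqrt.sqrt_mul_self
  have hq_pd : q.PosDef := sqrt_posDef ht_pd
  set c4 : Mat k := invFourthPD hφB with hc4def
  have hc4 : c4 = q⁻¹ := rfl
  have hc4_pd : c4.PosDef := by rw [hc4]; exact hq_pd.inv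
  have hc4_herm : c4.IsHermitian := hc4_pd.1
  have hc4_mul : c4 * c4 = c2 := by
    rw [hc4, ← Matrix.mul_inv_rev, hq_mul, hc2]
  -- ===== superoperator matrices =====
  set V := phiMat φ with hVdef
  set Gk : Matrix (Fin k × Fin k) (Fin k × Fin k) ℂ := c2 ⊗ₖ c2ᵀ with hGkdef
  set Gn : Matrix (Fin n × Fin n) (Fin n × Fin n) ℂ := b2 ⊗ₖ b2ᵀ with hGndef
  set Ps : Matrix (Fin n × Fin n) (Fin n × Fin n) ℂ := s ⊗ₖ sᵀ with hPsdef
  set W : Matrix (Fin n × Fin n) (Fin n × Fin n) ℂ := Vᴴ * Gk * V with hWdef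
  have hGk_psd : Gk.PosSemidef := kron_psd hc2_pd.posSemidef hc2_pd.posSemidef.transpose
  have hGk_herm : Gk.IsHermitian := hGk_psd.1
  have hGn_psd : Gn.PosSemidef := kron_psd hb2_pd.posSemidef hb2_pd.posSemidef.transpose
  have hPs_herm : Ps.IsHermitian := kron_isHermitian hs_psd.1 hs_psd.1.transpose
  have hW_psd : W.PosSemidef := hGk_psd.conjTranspose_mul_mul_same V
  have hW_herm : W.IsHermitian := hW_psd.1
  have hGnPs : Gn * Ps = 1 := by
    rw [hGndef, hPsdef, ← Matrix.mul_kronecker_mul, hb2s, ← Matrix.transpose_mul, hsb2,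
      Matrix.transpose_one, Matrix.one_kronecker_one]
  have hPsGn : Ps * Gn = 1 := by
    rw [hGndef, hPsdef, ← Matrix.mul_kronecker_mul, hsb2, ← Matrix.transpose_mul, hb2s,
      Matrix.transpose_one, Matrix.one_kronecker_one]
  clear_value W Ps Gn Gk V c4 q c2 t b4 r b2 s
  -- ===== THE KEY INEQUALITY : W ≤ Gn =====
  have hGnW : (Gn - W).PosSemidef := by
    set M : Matrix (Fin k × Fin k) (Fin k × Fin k) ℂ := (φ B)⁻¹ ⊗ₖ (1 : Mat k) with hMdef
    set N : Matrix (Fin k × Fin k) (Fin k × Fin k) ℂ := (1 : Mat k) ⊗ₖ ((φ B)⁻¹)ᵀ with hNdef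
    set M' : Matrix (Fin n × Fin n) (Fin n × Fin n) ℂ := B⁻¹ ⊗ₖ (1 : Mat n) with hM'def
    set N' : Matrix (Fin n × Fin n) (Fin n × Fin n) ℂ := (1 : Mat n) ⊗ₖ (B⁻¹)ᵀ with hN'def
    have hMinv_r : M * ((φ B) ⊗ₖ (1 : Mat k)) = 1 := by
      rw [hMdef, ← Matrix.mul_kronecker_mul, Matrix.nonsing_inv_mul _ hφB_det,
        Matrix.mul_one, Matrix.one_kronecker_one]
    haveI : Invertible M := invertibleOfRightInverse _ _ hMinv_r
    have hMinv : M⁻¹ = (φ B) ⊗ₖ (1 : Mat k) := Matrix.inv_eq_right_inv hMinv_r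
    have hM_pd : M.PosDef :=
      posDef_of_psd_isUnit (kron_psd hφB.inv.posSemidef psd_one) (isUnit_of_invertible M)
    have hM'inv_r : M' * (B ⊗ₖ (1 : Mat n)) = 1 := by
      rw [hM'def, ← Matrix.mul_kronecker_mul, Matrix.nonsing_inv_mul _ hB_det,
        Matrix.mul_one, Matrix.one_kronecker_one]
    haveI : Invertible M' := invertibleOfRightInverse _ _ hM'inv_r
    have hM'inv : M'⁻¹ = B ⊗ₖ (1 : Mat n) := Matrix.inv_eq_right_inv hM'inv_r
    have hM'_pd : M'.PosDef :=
      posDef_of_psd_isUnit (kron_psd hB.inv.posSemidef psd_one) (isUnit_of_invertible M')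
    -- step 1 : the block matrix [[M, Gk], [Gk, N]] is psd
    have hstep1 : (fromBlocks M Gk Gk N).PosSemidef := by
      have h0 : (N - Gkᴴ * M⁻¹ * Gk).PosSemidef := by
        rw [hGk_herm.eq, hMinv, hGkdef, ← Matrix.mul_kronecker_mul, ← Matrix.mul_kronecker_mul,
          hc2sand]
        rw [Matrix.mul_one, ← Matrix.transpose_mul, hc2_mul, ← hNdef]
        rw [sub_self]
        exact PosSemidef.zero
      have := (PosDef.fromBlocks₁₁ Gk N hM_pd).mpr h0
      rwa [hGk_herm.eq] at this
    -- step 2 : conjugate by diag(V, V)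
    have hstep2 : (fromBlocks (Vᴴ * M * V) W W (Vᴴ * N * V)).PosSemidef := by
      have h := hstep1.conjTranspose_mul_mul_same (fromBlocks V 0 0 V)
      have heq : (fromBlocks V 0 0 V)ᴴ * (fromBlocks M Gk Gk N) * (fromBlocks V 0 0 V)
          = fromBlocks (Vᴴ * M * V) (Vᴴ * Gk * V) (Vᴴ * Gk * V) (Vᴴ * N * V) := by
        rw [fromBlocks_conjTranspose, fromBlocks_multiply, fromBlocks_multiply]
        simp [Matrix.mul_assoc]
      rw [hWdef]
      rwa [heq] at h
    -- step 3 : monotonicity (Choi trace inequalities)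
    have hMM' : (M' - Vᴴ * M * V).PosSemidef := by
      rw [posSemidef_iff_dotProduct_mulVec]
      constructor
      · exact (kron_isHermitian hB.1.inv isHermitian_one).sub
          (hM_pd.posSemidef.conjTranspose_mul_mul_same V).1
      · intro x
        set X : Mat n := Matrix.of fun i j => x (i, j) with hXdef
        have hx : x = vecM X := (vecM_of x).symm
        have hterm1 : star x ⬝ᵥ M' *ᵥ x = (Xᴴ * B⁻¹ * X).trace := by
          rw [hx, hM'def, ← Matrix.transpose_one (α := ℂ) (n := Fin n), quad_eq_trace,
            Matrix.mul_one]
        have hterm2 : star x ⬝ᵥ (Vᴴ * M * V) *ᵥ x = ((φ X)ᴴ * (φ B)⁻¹ * (φ X)).trace := by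
          rw [hx, ← Matrix.mulVec_mulVec, ← Matrix.mulVec_mulVec, hVdef, phiMat_mulVec,
            dotProduct_mulVec, ← star_mulVec, phiMat_mulVec, hMdef,
            ← Matrix.transpose_one (α := ℂ) (n := Fin k), quad_eq_trace, Matrix.mul_one]
        rw [sub_mulVec, dotProduct_sub, hterm1, hterm2]
        have hchoi := hCP.choi hB hφB X
        have htr := psd_trace_nonneg hchoi
        rw [trace_sub, hTP] at htr
        simpa using htr
    have hNN' : (N' - Vᴴ * N * V).PosSemidef := by
      rw [posSemidef_iff_dotProduct_mulVec]
      constructor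
      · exact (kron_isHermitian isHermitian_one hB.1.inv.transpose).sub
          ((kron_psd psd_one hφB.inv.posSemidef.transpose).conjTranspose_mul_mul_same V).1
      · intro x
        set X : Mat n := Matrix.of fun i j => x (i, j) with hXdef
        have hx : x = vecM X := (vecM_of x).symm
        have hterm1 : star x ⬝ᵥ N' *ᵥ x = (X * B⁻¹ * Xᴴ).trace := by
          rw [hx, hN'def, quad_eq_trace, Matrix.mul_one, Matrix.trace_mul_cycle,
            Matrix.trace_mul_cycle]
        have hterm2 : star x ⬝ᵥ (Vᴴ * N * V) *ᵥ x
            = ((φ X) * (φ B)⁻¹ * (φ X)ᴴ).trace := by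
          rw [hx, ← Matrix.mulVec_mulVec, ← Matrix.mulVec_mulVec, hVdef, phiMat_mulVec,
            dotProduct_mulVec, ← star_mulVec, phiMat_mulVec, hNdef, quad_eq_trace,
            Matrix.mul_one, Matrix.trace_mul_cycle, Matrix.trace_mul_cycle]
        rw [sub_mulVec, dotProduct_sub, hterm1, hterm2]
        have hchoi := hCP.choi hB hφB Xᴴ
        rw [conjTranspose_conjTranspose, hCP.map_conjTranspose, conjTranspose_conjTranspose]
          at hchoi
        have htr := psd_trace_nonneg hchoi
        rw [trace_sub, hTP] at htr
        simpa using htr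
    -- step 4 : put the blocks together
    have hstep4 : (fromBlocks M' W W N').PosSemidef := by
      have hsum : fromBlocks M' W W N'
          = fromBlocks (M' - Vᴴ * M * V) 0 0 (N' - Vᴴ * N * V)
            + fromBlocks (Vᴴ * M * V) W W (Vᴴ * N * V) := by
        rw [fromBlocks_add, sub_add_cancel, sub_add_cancel, zero_add]
      rw [hsum]
      exact (posSemidef_fromBlocks_diag hMM' hNN').add hstep2
    -- step 5 : Schur complement
    have hstep5 : (N' - W * (B ⊗ₖ (1 : Mat n)) * W).PosSemidef := by
      have h := (PosDef.fromBlocks₁₁ W N' hM'_pd).mp (by rwa [hW_herm.eq])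
      rwa [hW_herm.eq, hM'inv] at h
    -- step 6 : conjugate by s ⊗ₖ 1
    set sl : Matrix (Fin n × Fin n) (Fin n × Fin n) ℂ := s ⊗ₖ (1 : Mat n) with hsldef
    have hsl_herm : sl.IsHermitian := kron_isHermitian hs_psd.1 isHermitian_one
    set H : Matrix (Fin n × Fin n) (Fin n × Fin n) ℂ := sl * W * sl with hHdef
    set Z : Matrix (Fin n × Fin n) (Fin n × Fin n) ℂ := B ⊗ₖ (B⁻¹)ᵀ with hZdef
    clear_value Z H sl
    have hF : (Z - H * H).PosSemidef := by
      have h := hstep5.conjTranspose_mul_mul_same sl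
      have heq : slᴴ * (N' - W * (B ⊗ₖ (1 : Mat n)) * W) * sl = Z - H * H := by
        rw [hsl_herm.eq]
        have hBsl : B ⊗ₖ (1 : Mat n) = sl * sl := by
          rw [hsldef, ← Matrix.mul_kronecker_mul, hs_mul, Matrix.mul_one]
        have hslN' : sl * N' * sl = Z := by
          rw [hsldef, hN'def, hZdef, ← Matrix.mul_kronecker_mul, ← Matrix.mul_kronecker_mul]
          rw [Matrix.mul_one, Matrix.one_mul, Matrix.mul_one, hs_mul]
        rw [hBsl, ← hslN', hHdef]
        noncomm_ring
      rwa [heq] at h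
    have hHherm : H.IsHermitian := by
      rw [Matrix.IsHermitian, hHdef, conjTranspose_mul, conjTranspose_mul, hsl_herm.eq,
        hW_herm.eq, Matrix.mul_assoc]
    have hH2_psd : (H * H).PosSemidef := by
      have : H * H = Hᴴ * H := by rw [hHherm.eq]
      rw [this]
      exact posSemidef_conjTranspose_mul_self H
    have hZ_psd : Z.PosSemidef := by
      rw [hZdef]
      exact kron_psd hB.posSemidef hB.inv.posSemidef.transpose
    have hsqrtZ : hZ_psd.sqrt = s ⊗ₖ b2ᵀ := by
      refine ((kron_psd hs_psd hb2_pd.posSemidef.transpose).eq_sqrt_of_sq_eq hZ_psd ?_).symm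
      rw [hZdef, pow_two, ← Matrix.mul_kronecker_mul, hs_mul, ← Matrix.transpose_mul, hb2_mul]
    have hchain : ((s ⊗ₖ b2ᵀ) - H).PosSemidef := by
      have h1 := sqrt_monotone hH2_psd hZ_psd hF
      have h2 := le_sqrt_sq hHherm hH2_psd
      have h3 := h1.add h2
      rw [sub_add_sub_cancel, hsqrtZ] at h3
      exact h3
    -- step 7 : conjugate by b2 ⊗ₖ 1
    set bl : Matrix (Fin n × Fin n) (Fin n × Fin n) ℂ := b2 ⊗ₖ (1 : Mat n) with hbldef
    have hbl_herm : bl.IsHermitian := kron_isHermitian hb2_herm isHermitian_one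
    have h := hchain.conjTranspose_mul_mul_same bl
    have heq : blᴴ * ((s ⊗ₖ b2ᵀ) - H) * bl = Gn - W := by
      rw [hbl_herm.eq, Matrix.mul_sub, Matrix.sub_mul]
      have h1 : bl * (s ⊗ₖ b2ᵀ) * bl = Gn := by
        rw [hbldef, hGndef, ← Matrix.mul_kronecker_mul, ← Matrix.mul_kronecker_mul,
          Matrix.one_mul, Matrix.mul_one, hb2s, Matrix.one_mul]
      have h2 : bl * H * bl = W := by
        rw [hHdef, hbldef, hsldef]
        have hba : (b2 ⊗ₖ (1 : Mat n)) * (s ⊗ₖ (1 : Mat n)) = 1 := by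
          rw [← Matrix.mul_kronecker_mul, hb2s, Matrix.mul_one, Matrix.one_kronecker_one]
        have hab : (s ⊗ₖ (1 : Mat n)) * (b2 ⊗ₖ (1 : Mat n)) = 1 := by
          rw [← Matrix.mul_kronecker_mul, hsb2, Matrix.mul_one, Matrix.one_kronecker_one]
        calc (b2 ⊗ₖ (1 : Mat n)) * ((s ⊗ₖ (1 : Mat n)) * W * (s ⊗ₖ (1 : Mat n)))
              * (b2 ⊗ₖ (1 : Mat n))
            = ((b2 ⊗ₖ (1 : Mat n)) * (s ⊗ₖ (1 : Mat n))) * W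
              * ((s ⊗ₖ (1 : Mat n)) * (b2 ⊗ₖ (1 : Mat n))) := by noncomm_ring
          _ = W := by rw [hba, hab, Matrix.one_mul, Matrix.mul_one]
      rw [h1, h2]
    rwa [heq] at h
  -- ===== FINAL ASSEMBLY =====
  set u : Fin n × Fin n → ℂ := vecM A with hudef
  set w : Fin n × Fin n → ℂ := W *ᵥ u with hwdef
  set p : Fin n × Fin n → ℂ := Ps *ᵥ w with hpdef
  have hφA_herm : (φ A)ᴴ = φ A := by
    rw [← hCP.map_conjTranspose, hA.1.eq]
  have hconj : ∀ (a b : Fin n × Fin n → ℂ), star (star a ⬝ᵥ b) = star b ⬝ᵥ a := by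
    intro a b
    simp [dotProduct, star_sum, mul_comm]
  have hGnp : Gn *ᵥ p = w := by
    rw [hpdef, Matrix.mulVec_mulVec, hGnPs, Matrix.one_mulVec]
  have hpdot : ∀ z : Fin n × Fin n → ℂ, star p ⬝ᵥ z = star w ⬝ᵥ Ps *ᵥ z := by
    intro z
    rw [hpdef, star_mulVec, hPs_herm.eq, ← dotProduct_mulVec]
  have hWdot : ∀ z : Fin n × Fin n → ℂ, star u ⬝ᵥ W *ᵥ z = star w ⬝ᵥ z := by
    intro z
    rw [dotProduct_mulVec, hwdef, star_mulVec, hW_herm.eq]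
  -- identity for S2 A hB
  have hS2A : S2 A hB = (star u ⬝ᵥ Gn *ᵥ u).re := by
    have e : S2 A hB = (((invFourthPD hB * A * invFourthPD hB) ^ 2).trace).re := rfl
    have h2 : star u ⬝ᵥ Gn *ᵥ u = (Aᴴ * b2 * A * b2).trace := by
      rw [hudef, hGndef, quad_eq_trace]
    have h3 : ((b4 * A * b4) ^ 2).trace = (Aᴴ * b2 * A * b2).trace := by
      rw [hA.1.eq]
      have h1 : (b4 * A * b4) ^ 2 = b4 * (A * b2 * A * b4) := by
        rw [pow_two, ← hb4_mul]
        noncomm_ring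
      rw [h1, Matrix.trace_mul_comm]
      congr 1
      rw [Matrix.mul_assoc (A * b2 * A) b4 b4, hb4_mul]
    rw [e, ← hb4def, h3, h2]
  -- identity for S2 (φ A) hφB
  have hS2φA : S2 (φ A) hφB = (star u ⬝ᵥ w).re := by
    have e : S2 (φ A) hφB
        = (((invFourthPD hφB * φ A * invFourthPD hφB) ^ 2).trace).re := rfl
    have h2 : star u ⬝ᵥ w = ((φ A)ᴴ * c2 * (φ A) * c2).trace := by
      rw [hwdef, hWdef, ← Matrix.mulVec_mulVec, ← Matrix.mulVec_mulVec, hudef, hVdef,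
        phiMat_mulVec, dotProduct_mulVec, ← star_mulVec, phiMat_mulVec, hGkdef,
        quad_eq_trace]
    have h3 : ((c4 * φ A * c4) ^ 2).trace = ((φ A)ᴴ * c2 * (φ A) * c2).trace := by
      rw [hφA_herm]
      have h1 : (c4 * φ A * c4) ^ 2 = c4 * (φ A * c2 * φ A * c4) := by
        rw [pow_two, ← hc4_mul]
        noncomm_ring
      rw [h1, Matrix.trace_mul_comm]
      congr 1
      rw [Matrix.mul_assoc (φ A * c2 * φ A) c4 c4, hc4_mul]
    rw [e, ← hc4def, h3, h2]
  -- identity for the weighted norm of the recovery defect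
  have hvecpetz : vecM (A - petz φ hB hφB (φ A)) = u - p := by
    rw [vecM_sub]
    have hpz : petz φ hB hφB (φ A) = s * hsAdj φ (c2 * (φ A) * c2) * s := by
      rw [hsdef, hc2def]
      rfl
    rw [hpz]
    have h1 : vecM (s * hsAdj φ (c2 * (φ A) * c2) * s)
        = Ps *ᵥ vecM (hsAdj φ (c2 * (φ A) * c2)) := by
      rw [hPsdef, kron_mulVec]
    have h2 : vecM (hsAdj φ (c2 * (φ A) * c2)) = Vᴴ *ᵥ vecM (c2 * (φ A) * c2) := by
      rw [hVdef, phiMat_conjT_mulVec]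
    have h3 : vecM (c2 * (φ A) * c2) = Gk *ᵥ (V *ᵥ u) := by
      rw [hudef, hVdef, phiMat_mulVec, hGkdef, kron_mulVec]
    rw [h1, h2, h3, hudef]
    congr 1
    rw [hpdef, hwdef, hWdef, ← Matrix.mulVec_mulVec, ← Matrix.mulVec_mulVec, hudef]
  have hwN : wNormSq (A - petz φ hB hφB (φ A)) hB = (star (u - p) ⬝ᵥ Gn *ᵥ (u - p)).re := by
    set X : Mat n := A - petz φ hB hφB (φ A) with hXdef
    have e : wNormSq X hB
        = (((invFourthPD hB * X * invFourthPD hB)ᴴ * (invFourthPD hB * X * invFourthPD hB)).trace).re := rfl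
    have h2 : star (u - p) ⬝ᵥ Gn *ᵥ (u - p) = (Xᴴ * b2 * X * b2).trace := by
      rw [← hvecpetz, hGndef, quad_eq_trace]
    have h3 : ((b4 * X * b4)ᴴ * (b4 * X * b4)).trace = (Xᴴ * b2 * X * b2).trace := by
      have hct : (b4 * X * b4)ᴴ = b4 * Xᴴ * b4 := by
        rw [conjTranspose_mul, conjTranspose_mul, hb4_herm.eq, Matrix.mul_assoc]
      have h1 : (b4 * Xᴴ * b4) * (b4 * X * b4) = b4 * (Xᴴ * b2 * X * b4) := by
        rw [← hb4_mul]
        noncomm_ring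
      rw [hct, h1, Matrix.trace_mul_comm]
      congr 1
      rw [Matrix.mul_assoc (Xᴴ * b2 * X) b4 b4, hb4_mul]
    rw [e, ← hb4def, h3, h2]
  -- algebraic expansions
  have hstar_sub : star (u - p) = star u - star p := by
    funext j
    simp [star_sub]
  have e1 : star (u - p) ⬝ᵥ Gn *ᵥ (u - p)
      = star u ⬝ᵥ Gn *ᵥ u - star u ⬝ᵥ w - star w ⬝ᵥ u + star w ⬝ᵥ p := by
    rw [Matrix.mulVec_sub, hGnp, hstar_sub, sub_dotProduct, dotProduct_sub, dotProduct_sub]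
    have t1 : star p ⬝ᵥ Gn *ᵥ u = star w ⬝ᵥ u := by
      rw [hpdot, Matrix.mulVec_mulVec, hPsGn, Matrix.one_mulVec]
    have t2 : star p ⬝ᵥ w = star w ⬝ᵥ p := by
      rw [hpdot, ← hpdef]
    rw [t1, t2]
    ring
  have e2 : star (u - p) ⬝ᵥ W *ᵥ (u - p)
      = star u ⬝ᵥ w - star w ⬝ᵥ p - star w ⬝ᵥ p + star p ⬝ᵥ W *ᵥ p := by
    rw [Matrix.mulVec_sub, hstar_sub, sub_dotProduct, dotProduct_sub, dotProduct_sub]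
    have t1 : star u ⬝ᵥ W *ᵥ u = star u ⬝ᵥ w := by rw [← hwdef]
    have t2 : star u ⬝ᵥ W *ᵥ p = star w ⬝ᵥ p := hWdot p
    have t3 : star p ⬝ᵥ W *ᵥ u = star p ⬝ᵥ w := by rw [← hwdef]
    have t4 : star p ⬝ᵥ w = star w ⬝ᵥ p := by rw [hpdot, ← hpdef]
    rw [t1, t2, t3, t4]
    ring
  -- the key scalar inequality
  have hkey : (star w ⬝ᵥ p).re ≤ (star u ⬝ᵥ w).re := by
    have h1 := psd_re_quad hW_psd (u - p)
    rw [e2] at h1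
    have h2 := psd_re_quad hGnW p
    have h3 : star p ⬝ᵥ (Gn - W) *ᵥ p = star w ⬝ᵥ p - star p ⬝ᵥ W *ᵥ p := by
      rw [Matrix.sub_mulVec, dotProduct_sub, hGnp, hpdot, ← hpdef]
    rw [h3] at h2
    simp only [Complex.add_re, Complex.sub_re] at h1 h2 ⊢
    linarith
  have hru : (star w ⬝ᵥ u).re = (star u ⬝ᵥ w).re := by
    rw [← hconj u w]
    exact Complex.conj_re _
  -- conclusion
  rw [hwN, hS2A, hS2φA, e1]
  simp only [Complex.add_re, Complex.sub_re]
  linarith
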